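/- The inverse Mills ratio 𝒱(x) = φ(x)/Φ(x) is strictly decreasing on ℝ and satisfies 𝒱(x) > 0 and 𝒱(x) > −x for all x. -/

import Mathlib

open MeasureTheory

/-- Standard normal density. -/
noncomputable def stdNormalPDF (x : ℝ) : ℝ :=
  (Real.sqrt (2 * Real.pi))⁻¹ * Real.exp (-x ^ 2 / 2)

/-- Standard normal CDF. -/
noncomputable def stdNormalCDF (x : ℝ) : ℝ := ∫ u in Set.Iic x, stdNormalPDF u

/-- Inverse Mills ratio `𝒱(x) = φ(x)/Φ(x)`. -/
noncomputable def millsV (x : ℝ) : ℝ := stdNormalPDF x / stdNormalCDF x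

/-!
Since `φ' = -x φ`, the quotient rule gives `𝒱' = -𝒱 (𝒱 + x)`, so monotonicity reduces to
`𝒱 + x > 0`, i.e. `φ(x) + x Φ(x) > 0`. Integrating `φ' = -u φ` over `(-∞, x]` shows
`φ(x) = -∫_{u ≤ x} u φ(u)`, hence `φ(x) + x Φ(x) = ∫_{u ≤ x} (x - u) φ(u) du`, the integral
of a function that is positive on `(-∞, x)`.
-/

open Set Filter Topology ProbabilityTheory

theorem setIntegral_pos_of_forall_pos {X : Type*} [MeasurableSpace X] {μ : Measure X}
    {s : Set X} {f : X → ℝ} (hs : MeasurableSet s) (hμs : μ s ≠ 0)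
    (hf : IntegrableOn f s μ) (hpos : ∀ u ∈ s, 0 < f u) : 0 < ∫ u in s, f u ∂μ := by
  rw [setIntegral_pos_iff_support_of_nonneg_ae ((ae_restrict_iff' hs).2
    (ae_of_all _ fun u hu => (hpos u hu).le)) hf]
  have hsupp : Function.support f ∩ s = s :=
    inter_eq_right.2 fun u hu => (hpos u hu).ne'
  rwa [hsupp, pos_iff_ne_zero]

theorem hasDerivAt_setIntegral_Iic {f : ℝ → ℝ} (hf : Integrable f) (hc : Continuous f)
    (x : ℝ) : HasDerivAt (fun y => ∫ u in Iic y, f u) (f x) x := by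
  have hsplit : (fun y => ∫ u in Iic y, f u) =
      fun y => (∫ u in Iic 0, f u) + ∫ u in (0 : ℝ)..y, f u := by
    ext y
    rw [← intervalIntegral.integral_Iic_sub_Iic hf.integrableOn hf.integrableOn]
    ring
  rw [hsplit]
  exact (intervalIntegral.integral_hasDerivAt_right hf.intervalIntegrable
    (hc.stronglyMeasurableAtFilter _ _) hc.continuousAt).const_add _

theorem stdNormalPDF_eq_gaussianPDFReal : stdNormalPDF = gaussianPDFReal 0 1 := by
  ext x
  simp [stdNormalPDF, gaussianPDFReal]

theorem stdNormalPDF_pos (x : ℝ) : 0 < stdNormalPDF x := by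
  rw [stdNormalPDF_eq_gaussianPDFReal]
  exact gaussianPDFReal_pos _ _ _ one_ne_zero

theorem integrable_stdNormalPDF : Integrable stdNormalPDF := by
  rw [stdNormalPDF_eq_gaussianPDFReal]
  exact integrable_gaussianPDFReal _ _

theorem continuous_stdNormalPDF : Continuous stdNormalPDF := by
  unfold stdNormalPDF
  fun_prop

theorem integrable_id_mul_stdNormalPDF : Integrable fun x : ℝ => x * stdNormalPDF x := by
  have h := (integrable_mul_exp_neg_mul_sq (b := 1 / 2) (by norm_num)).const_mul
    (Real.sqrt (2 * Real.pi))⁻¹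
  refine h.congr (ae_of_all _ fun x => ?_)
  simp only [stdNormalPDF]
  ring_nf

theorem hasDerivAt_stdNormalPDF (x : ℝ) :
    HasDerivAt stdNormalPDF (-x * stdNormalPDF x) x := by
  have hexp : HasDerivAt (fun y : ℝ => -y ^ 2 / 2) (-x) x :=
    ((hasDerivAt_pow 2 x).neg.div_const 2).congr_deriv (by ring)
  refine (hexp.exp.const_mul (Real.sqrt (2 * Real.pi))⁻¹).congr_deriv ?_
  rw [stdNormalPDF]
  ring

theorem tendsto_stdNormalPDF_atBot : Tendsto stdNormalPDF atBot (𝓝 0) :=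
  tendsto_zero_of_hasDerivAt_of_integrableOn_Iic (a := 0) (fun x _ => hasDerivAt_stdNormalPDF x)
    (integrable_id_mul_stdNormalPDF.neg.congr (ae_of_all _ fun x => by simp [neg_mul])).integrableOn
    integrable_stdNormalPDF.integrableOn

theorem stdNormalCDF_pos (x : ℝ) : 0 < stdNormalCDF x :=
  setIntegral_pos_of_forall_pos measurableSet_Iic (by simp [Real.volume_Iic])
    integrable_stdNormalPDF.integrableOn fun u _ => stdNormalPDF_pos u

theorem hasDerivAt_stdNormalCDF (x : ℝ) : HasDerivAt stdNormalCDF (stdNormalPDF x) x :=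
  hasDerivAt_setIntegral_Iic integrable_stdNormalPDF continuous_stdNormalPDF x

theorem setIntegral_Iic_id_mul_stdNormalPDF (x : ℝ) :
    ∫ u in Iic x, u * stdNormalPDF u = -stdNormalPDF x := by
  have h := integral_Iic_of_hasDerivAt_of_tendsto' (a := x) (f := fun y => -stdNormalPDF y)
    (fun y _ => (hasDerivAt_stdNormalPDF y).neg.congr_deriv (by ring))
    integrable_id_mul_stdNormalPDF.integrableOn (by simpa using tendsto_stdNormalPDF_atBot.neg)
  simpa using h

theorem stdNormalPDF_add_mul_stdNormalCDF (x : ℝ) :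
    stdNormalPDF x + x * stdNormalCDF x = ∫ u in Iic x, (x - u) * stdNormalPDF u := by
  simp only [sub_mul]
  rw [integral_sub (integrable_stdNormalPDF.const_mul x).integrableOn
    integrable_id_mul_stdNormalPDF.integrableOn, integral_const_mul,
    setIntegral_Iic_id_mul_stdNormalPDF, stdNormalCDF]
  ring

theorem stdNormalPDF_add_mul_stdNormalCDF_pos (x : ℝ) :
    0 < stdNormalPDF x + x * stdNormalCDF x := by
  rw [stdNormalPDF_add_mul_stdNormalCDF, integral_Iic_eq_integral_Iio]
  refine setIntegral_pos_of_forall_pos measurableSet_Iio (by simp [Real.volume_Iio]) ?_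
    fun u hu => mul_pos (sub_pos.2 hu) (stdNormalPDF_pos u)
  simp only [sub_mul]
  exact ((integrable_stdNormalPDF.const_mul x).sub integrable_id_mul_stdNormalPDF).integrableOn

theorem millsV_pos (x : ℝ) : 0 < millsV x :=
  div_pos (stdNormalPDF_pos x) (stdNormalCDF_pos x)

theorem millsV_add_pos (x : ℝ) : 0 < millsV x + x := by
  have hΦ := stdNormalCDF_pos x
  have h : millsV x + x = (stdNormalPDF x + x * stdNormalCDF x) / stdNormalCDF x := by
    rw [millsV]
    field_simp
  rw [h]
  exact div_pos (stdNormalPDF_add_mul_stdNormalCDF_pos x) hΦ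

theorem hasDerivAt_millsV (x : ℝ) :
    HasDerivAt millsV (-(millsV x * (millsV x + x))) x := by
  have hΦ := (stdNormalCDF_pos x).ne'
  refine ((hasDerivAt_stdNormalPDF x).div (hasDerivAt_stdNormalCDF x) hΦ).congr_deriv ?_
  simp only [millsV]
  field_simp
  ring

/-- The inverse Mills ratio is strictly decreasing, positive, and satisfies
`𝒱(x) > −x` for all `x`. -/
theorem millsV_strictAnti_pos_gt_neg :
    StrictAnti millsV ∧ (∀ x : ℝ, 0 < millsV x) ∧ (∀ x : ℝ, -x < millsV x) := by
  refine ⟨strictAnti_of_hasDerivAt_neg hasDerivAt_millsV fun x => ?_, millsV_pos,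
    fun x => by linarith [millsV_add_pos x]⟩
  exact neg_neg_of_pos (mul_pos (millsV_pos x) (millsV_add_pos x))
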